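/- arXiv:2510.24818 — 2 statements merged into one kernel-verified Lean document; each statement's English description precedes it below -/
import Mathlib

section
/- Let R → S be a faithfully flat ring map, M an R-module, N an S-module that is a base change of M along R → S, and rs a list of elements of R that is an M-regular sequence. Then the image of rs in S is an N-regular sequence. -/
open RingTheory.Sequence

/-- Regular sequences are preserved under faithfully flat base change. -/
theorem IsRegular.of_faithfullyFlat_of_isBaseChange {R S : Type*} [CommRing R] [CommRing S]
    [Algebra R S] {M N : Type*} [AddCommGroup M] [Module R M] [AddCommGroup N] [Module R N]
    [Module S N] [IsScalarTower R S N] [Module.FaithfullyFlat R S] {f : M →ₗ[R] N}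
    (hf : IsBaseChange S f) {rs : List R} (reg : IsRegular M rs) :
    IsRegular N (rs.map (algebraMap R S)) :=
  reg.of_faithfullyFlat_of_isBaseChange hf
end

section
/- Let R be a Noetherian local ring with maximal ideal m, M a finitely generated R-module, and x ∈ m a non-zerodivisor on M. If M/xM is free over R/(x), then M is free over R. -/
open IsLocalRing

/-- The `R ⧸ (x)`-module structure on `M ⧸ xM`. -/
noncomputable instance QuotSMulTop.instModuleQuotientSpanSingleton {R : Type*} [CommRing R]
    (x : R) (M : Type*) [AddCommGroup M] [Module R M] :
    Module (R ⧸ Ideal.span {x}) (QuotSMulTop x M) :=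
  Module.IsTorsionBySet.module <| by
    rw [show ((Ideal.span {x} : Ideal R) : Set R) = ((R ∙ x : Submodule R R) : Set R) from rfl,
      Module.isTorsionBySet_span_singleton_iff]
    intro m
    induction m using Submodule.Quotient.induction_on with
    | H y =>
      rw [← Submodule.Quotient.mk_smul, Submodule.Quotient.mk_eq_zero]
      exact Submodule.smul_mem_pointwise_smul y x ⊤ trivial

/-- If `x` is an `M`-regular element of the maximal ideal of a Noetherian local ring `R`
and `M/xM` is free over `R/(x)`, then `M` is free over `R`. -/
theorem free_of_quotSMulTop_free {R : Type*} [CommRing R] [IsLocalRing R] [IsNoetherianRing R]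
    (M : Type*) [AddCommGroup M] [Module R M] [Module.Finite R M] {x : R}
    (mem : x ∈ maximalIdeal R) (reg : IsSMulRegular M x)
    (free : Module.Free (R ⧸ Ideal.span {x}) (QuotSMulTop x M)) : Module.Free R M :=
  have := Module.finitePresentation_of_finite R M
  (Module.free_quotSMulTop_iff_free R M (maximalIdeal_le_jacobson ⊥ mem) reg).mp free
end
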